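/- arXiv:math/0605388 — 2 statements merged into one kernel-verified Lean document; each statement's English description precedes it below -/
import Mathlib

section
/- Under the hypotheses of the previous setting, if moreover H¹(M;ℝ) = 0 and θ satisfies L_{X_i}θ = t_i θ with η(X_i) = t_i closed, then there exists a globally defined smooth function u on M such that L_{X_i}(e^u θ) = 0 for all i = 1,…,N. -/
/-!
STATEMENT 3.  Under the hypotheses of Statement 2, if moreover H¹(M;ℝ) = 0
(encoded: every smooth closed 1-form on U is exact) and θ satisfies
L_{Xᵢ}θ = tᵢθ with η (defined by η(Xᵢ) = tᵢ) closed, then there exists a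
globally defined smooth function u on M such that L_{Xᵢ}(eᵘ θ) = 0 for all
i = 1,…,N.   (Flat local model conventions as in Statement 2.)
-/

noncomputable section

variable {E : Type*} [NormedAddCommGroup E] [NormedSpace ℝ E]

/-- Lie bracket of vector fields (flat local model). -/
def lieB (X Y : E → E) (p : E) : E := fderiv ℝ Y p (X p) - fderiv ℝ X p (Y p)

/-- Lie derivative of a 1-form along a vector field (flat local model). -/
def lieD (X : E → E) (θ : E → E → ℝ) (p v : E) : ℝ :=
  fderiv ℝ (fun q => θ q v) p (X p) + θ p (fderiv ℝ X p v)

/-- Exterior derivative of a 1-form (flat local model). -/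
def extD (η : E → E → ℝ) (p v w : E) : ℝ :=
  fderiv ℝ (fun q => η q w) p v - fderiv ℝ (fun q => η q v) p w

theorem exists_global_u {N : ℕ} (U : Set E) (hU : IsOpen U)
    (X : Fin N → E → E) (t : Fin N → E → ℝ) (c : Fin N → Fin N → Fin N → ℝ)
    (θ η : E → E → ℝ)
    (hXsm : ∀ i, ContDiffOn ℝ (⊤ : ℕ∞) (X i) U)
    (htsm : ∀ i, ContDiffOn ℝ (⊤ : ℕ∞) (t i) U)
    (hθsm : ∀ v, ContDiffOn ℝ (⊤ : ℕ∞) (fun q => θ q v) U)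
    (hηsm : ∀ v, ContDiffOn ℝ (⊤ : ℕ∞) (fun q => η q v) U)
    (hθlin : ∀ p, IsLinearMap ℝ (θ p))
    (hηlin : ∀ p, IsLinearMap ℝ (η p))
    (hspan : ∀ p ∈ U, Submodule.span ℝ (Set.range fun i => X i p) = ⊤)
    (hbr : ∀ i j, ∀ p ∈ U, lieB (X i) (X j) p = ∑ k, c i j k • X k p)
    (hlie : ∀ i, ∀ p ∈ U, ∀ v, lieD (X i) θ p v = t i p * θ p v)
    (hη : ∀ i, ∀ p ∈ U, η p (X i p) = t i p)
    -- η is closed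
    (hclosed : ∀ p ∈ U, ∀ v w, extD η p v w = 0)
    -- H¹(M;ℝ) = 0 : every smooth closed 1-form is exact
    (hH1 : ∀ ω : E → E → ℝ, (∀ p, IsLinearMap ℝ (ω p)) →
      (∀ v, ContDiffOn ℝ (⊤ : ℕ∞) (fun q => ω q v) U) →
      (∀ p ∈ U, ∀ v w, extD ω p v w = 0) →
      ∃ g : E → ℝ, ContDiffOn ℝ (⊤ : ℕ∞) g U ∧ ∀ p ∈ U, ∀ v, fderiv ℝ g p v = ω p v) :
    -- conclusion: a global smooth u with L_{Xᵢ}(eᵘ θ) = 0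
    ∃ u : E → ℝ, ContDiffOn ℝ (⊤ : ℕ∞) u U ∧
      ∀ i, ∀ p ∈ U, ∀ v,
        lieD (X i) (fun q w => Real.exp (u q) * θ q w) p v = 0 := by
  obtain ⟨g, hgsm, hgd⟩ := hH1 η hηlin hηsm hclosed
  refine ⟨fun q => -(g q), hgsm.neg, ?_⟩
  intro i p hp v
  have hpU := hU.mem_nhds hp
  have hgdiff : DifferentiableAt ℝ g p :=
    (hgsm.contDiffAt hpU).differentiableAt (by norm_num)
  have hθdiff : DifferentiableAt ℝ (fun q => θ q v) p :=
    ((hθsm v).contDiffAt hpU).differentiableAt (by norm_num)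
  have hexp : HasFDerivAt (fun q => Real.exp (-(g q)))
      (Real.exp (-(g p)) • (-(fderiv ℝ g p))) p :=
    (hgdiff.hasFDerivAt.neg).exp
  have hprod : HasFDerivAt (fun q => Real.exp (-(g q)) * θ q v)
      (Real.exp (-(g p)) • (fderiv ℝ (fun q => θ q v) p)
        + θ p v • (Real.exp (-(g p)) • (-(fderiv ℝ g p)))) p :=
    hexp.mul hθdiff.hasFDerivAt
  have hfd := hprod.fderiv
  have hlie' := hlie i p hp v
  have hgX : fderiv ℝ g p (X i p) = t i p := by
    rw [hgd p hp (X i p), hη i p hp]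
  unfold lieD at hlie' ⊢
  rw [hfd]
  simp only [ContinuousLinearMap.add_apply, ContinuousLinearMap.smul_apply,
    ContinuousLinearMap.neg_apply, smul_eq_mul, hgX]
  nlinarith [hlie', Real.exp_pos (-(g p))]
end
end

section
/- Let ∇ be a linear connection on V satisfying the Graham–Lee axioms: T_{1,0}(ℱ) is ∇-parallel, ∇L_θ = 0, ∇T = 0, ∇N = 0, and the torsion is pure (in particular τ(T_{1,0}(ℱ)) ⊆ T_{0,1}(ℱ)), where τ(X) = T_∇(T, X). Then φ∘τ + τ∘φ = 0 on T(ℱ), and τ is given on H(ℱ) by τ(X) = −½ φ((L_T φ)X). -/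
/-!
STATEMENT 13.  Let ∇ be a linear connection on V satisfying the Graham–Lee
axioms (T_{1,0}(ℱ) parallel, ∇L_θ = 0, ∇T = 0, ∇N = 0, pure torsion — in
particular τ(T_{1,0}(ℱ)) ⊆ T_{0,1}(ℱ), where τ(X) = T_∇(T,X)).  Then
φ∘τ + τ∘φ = 0 on T(ℱ), and on H(ℱ) the torsion is given by
τ(X) = −½ φ((L_T φ)X), where (L_Tφ)X = [T,φX] − φ[T,X].

Flat local model: vector fields are maps E → E on a real normed space E;
T(ℱ) = ker(dF) (dF plays the role of dφ), H(ℱ) = ker(dF) ∩ ker(θ);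
φ is the tangential almost-contact structure (φT = 0, φ² = −1 + θ⊗T on T(ℱ));
the purity axiom τ(T_{1,0}(ℱ)) ⊆ T_{0,1}(ℱ) is expressed through the
complexification: a (1,0) vector is (v, −φv) with v ∈ H(ℱ), a (0,1) vector is
(u, φu), and the ℂ-linear extension of τ sends (v,w) to (τv, τw).
Since ∇T = 0, τX = ∇_T X − [T,X].
-/

noncomputable section

variable {E : Type*} [NormedAddCommGroup E] [NormedSpace ℝ E]

theorem torsion_anticommutes_phi
    (U : Set E) (hU : IsOpen U)
    (θf : E → E → ℝ)      -- contact form of the leaves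
    (dF : E → E → ℝ)      -- annihilator of T(ℱ) (the rôle of dφ)
    (T : E → E)           -- characteristic field
    (φm τm : E → E → E)   -- tangential almost-contact structure and torsion τ
    (nabla : (E → E) → (E → E) → (E → E))  -- the connection ∇
    -- pointwise linearity
    (hφlin : ∀ p, IsLinearMap ℝ (φm p))
    (hτlin : ∀ p, IsLinearMap ℝ (τm p))
    (hθlin : ∀ p, IsLinearMap ℝ (θf p))
    (hdFlin : ∀ p, IsLinearMap ℝ (dF p))
    -- normalizations: θ(T) = 1, T tangent to ℱ, φT = 0, τT = 0
    (hθT : ∀ p ∈ U, θf p (T p) = 1)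
    (hTtan : ∀ p ∈ U, dF p (T p) = 0)
    (hφT : ∀ p ∈ U, φm p (T p) = 0)
    (hτT : ∀ p ∈ U, τm p (T p) = 0)
    -- φ and τ preserve H(ℱ) resp. map T(ℱ) to H(ℱ)
    (hφrange : ∀ p ∈ U, ∀ v, dF p v = 0 →
      dF p (φm p v) = 0 ∧ θf p (φm p v) = 0)
    (hτrange : ∀ p ∈ U, ∀ v, dF p v = 0 →
      dF p (τm p v) = 0 ∧ θf p (τm p v) = 0)
    -- φ² = −1 + θ⊗T on T(ℱ)
    (hφ2 : ∀ p ∈ U, ∀ v, dF p v = 0 → φm p (φm p v) = -v + θf p v • T p)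
    -- PURITY: τ(T_{1,0}(ℱ)) ⊆ T_{0,1}(ℱ) (complexified formulation)
    (hpure : ∀ p ∈ U, ∀ u : E × E,
      (dF p u.1 = 0 ∧ θf p u.1 = 0 ∧ u.2 = -φm p u.1) →
      τm p u.2 = φm p (τm p u.1))
    -- τX = ∇_T X − [T,X]  (torsion along T, with ∇T = 0)
    (hτdef : ∀ (X : E → E), ∀ p ∈ U, τm p (X p) = nabla T X p - lieB T X p)
    -- ∇φ = 0 (in the direction T, which is what is used)
    (hφpar : ∀ (X : E → E), ∀ p ∈ U,
      nabla T (fun q => φm q (X q)) p = φm p (nabla T X p)) :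
    -- conclusions
    (∀ p ∈ U, ∀ v, dF p v = 0 →
      φm p (τm p v) + τm p (φm p v) = 0)
    ∧ (∀ (X : E → E), (∀ q ∈ U, θf q (X q) = 0 ∧ dF q (X q) = 0) →
        ∀ p ∈ U,
          τm p (X p)
            = -((1/2 : ℝ) •
                φm p (lieB T (fun q => φm q (X q)) p - φm p (lieB T X p)))) := by
  have anti : ∀ p ∈ U, ∀ v, dF p v = 0 →
      φm p (τm p v) + τm p (φm p v) = 0 := by
    intro p hp v hv
    set h := v - θf p v • T p with hh
    have hdFh : dF p h = 0 := by
      rw [hh, (hdFlin p).map_sub, (hdFlin p).map_smul, hv, hTtan p hp]; simp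
    have hθh : θf p h = 0 := by
      rw [hh, (hθlin p).map_sub, (hθlin p).map_smul, hθT p hp]; simp
    have hpu := hpure p hp (h, -φm p h) ⟨hdFh, hθh, rfl⟩
    have hτneg : τm p (-φm p h) = -τm p (φm p h) := (hτlin p).map_neg _
    have key : τm p (φm p h) = -φm p (τm p h) := by
      rw [← hpu, hτneg, neg_neg]
    have hv' : v = h + θf p v • T p := by rw [hh]; abel
    have hφv : φm p v = φm p h := by
      rw [hv', (hφlin p).map_add, (hφlin p).map_smul, hφT p hp, smul_zero, add_zero]
    have hτv : τm p v = τm p h := by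
      rw [hv', (hτlin p).map_add, (hτlin p).map_smul, hτT p hp, smul_zero, add_zero]
    rw [hφv, hτv, key]; abel
  refine ⟨anti, ?_⟩
  intro X hX p hp
  obtain ⟨hθX, hdFX⟩ := hX p hp
  have hd1 := hτdef X p hp
  have hd2 := hτdef (fun q => φm q (X q)) p hp
  rw [hφpar X p hp] at hd2
  have hantiX := anti p hp (X p) hdFX
  have hnab : nabla T X p = τm p (X p) + lieB T X p := by rw [hd1]; abel
  have hτφ : τm p (φm p (X p)) = -φm p (τm p (X p)) := by
    have := hantiX
    linear_combination (norm := abel) this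
  have key2 : lieB T (fun q => φm q (X q)) p - φm p (lieB T X p)
      = (2:ℝ) • φm p (τm p (X p)) := by
    rw [hnab, (hφlin p).map_add] at hd2
    rw [hτφ] at hd2
    have : lieB T (fun q => φm q (X q)) p
        = φm p (τm p (X p)) + φm p (lieB T X p) + φm p (τm p (X p)) := by
      linear_combination (norm := abel) hd2
    rw [this, two_smul]; abel
  obtain ⟨hdFτ, hθτ⟩ := hτrange p hp (X p) hdFX
  have hφ2τ : φm p (φm p (τm p (X p))) = -(τm p (X p)) := by
    rw [hφ2 p hp _ hdFτ, hθτ, zero_smul, add_zero]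
  rw [key2, (hφlin p).map_smul, hφ2τ]
  module
end
end
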